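/- Fix a ∈ (0, π) and a function q : ℝ → ℂ, square-integrable on (0, π), with q(x) = 0 for all x outside (a, π). Fix ρ ∈ ℂ, ρ ≠ 0, λ = ρ². For ν ∈ {0,1} let y_{0,0}(x,λ) = cos(ρx), y_{1,0}(x,λ) = sin(ρx)/ρ, and y_{ν,k}(x,λ) = ∫_a^x (sin ρ(x−t)/ρ) q(t) y_{ν,k−1}(t−a, λ) dt for k = 1, 2. Let ω(x) = ∫_a^x q(t) dt, ω₁(x) = ∫_{2a}^x q(t) ω(t−a) dt, and R_ν(x,t) = q(t+a) ∫_a^t q(τ) dτ − q(t) ∫_{t+a}^x q(τ) dτ + (−1)^ν ∫_{t+a}^x q(τ) q(τ−t) dτ. Then for every ν ∈ {0,1} and every x with 2a ≤ x ≤ π: y_{ν,2}(x,λ) = −(ω₁(x)/(4λ)) y_{ν,0}(x−2a, λ) + ((−1)^ν/(4λ)) ∫_a^{x−a} R_ν(x,t) y_{ν,0}(x−2t, λ) dt. -/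

import Mathlib

open MeasureTheory Set
open scoped Real

noncomputable def y0 (ρ : ℂ) (ν : ℕ) (x : ℝ) : ℂ :=
  if ν = 0 then Complex.cos (ρ * (x : ℂ)) else Complex.sin (ρ * (x : ℂ)) / ρ

noncomputable def ySeq (a : ℝ) (q : ℝ → ℂ) (ρ : ℂ) (ν : ℕ) : ℕ → ℝ → ℂ
  | 0 => y0 ρ ν
  | k + 1 => fun x => ∫ t in a..x,
      (Complex.sin (ρ * ((x - t : ℝ) : ℂ)) / ρ) * q t * ySeq a q ρ ν k (t - a)
noncomputable def Rfun (a : ℝ) (q : ℝ → ℂ) (ν : ℕ) (x t : ℝ) : ℂ :=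
  q (t + a) * (∫ τ in a..t, q τ) - q t * (∫ τ in (t + a)..x, q τ)
    + (-1) ^ ν * ∫ τ in (t + a)..x, q τ * q (τ - t)

noncomputable def omega1 (a : ℝ) (q : ℝ → ℂ) (x : ℝ) : ℂ :=
  ∫ t in (2 * a)..x, q t * (∫ τ in a..(t - a), q τ)

/-
Product-to-sum formulas express `y_{ν,1}(t - a)` through `ω(t - a)` and an integral of `q`
against `yDual`, the companion of `y0`; a second application splits the integrand of `y_{ν,2}`
into four terms. As `q` vanishes on `(-∞, a]`, so does `y_{ν,1}(· - a)` on `(-∞, 2a]`, and the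
outer integral may start at `2a`. There one term is `ω₁`, one is the first part of `R_ν` after
the shift `t = u + a`, and the two double integrals give the other two parts of `R_ν` after
exchanging the order of integration over the triangle `a ≤ s ≤ t - a ≤ x - a` (for the
convolution-type term, after the substitution `u = t - s`). The signs match because
`((-1) ^ ν) ^ 2 = 1`.
-/

open Function

section Triangle

variable {E : Type*} [NormedAddCommGroup E] {F : ℝ → ℝ → E} {b d x : ℝ}

def triangle (b d x : ℝ) : Set (ℝ × ℝ) := {p | b < p.2 ∧ p.2 + d ≤ p.1 ∧ p.1 ≤ x}

lemma measurableSet_triangle : MeasurableSet (triangle b d x) :=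
  (measurableSet_lt measurable_const measurable_snd).inter
    ((measurableSet_le (measurable_snd.add_const d) measurable_fst).inter
      (measurableSet_le measurable_fst measurable_const))

lemma integrable_indicator_triangle
    (hF : IntegrableOn (uncurry F) (Icc (b + d) x ×ˢ Icc b (x - d))) :
    Integrable ((triangle b d x).indicator (uncurry F)) (volume.prod volume) := by
  have hsub : triangle b d x ⊆ Icc (b + d) x ×ˢ Icc b (x - d) := by
    rintro ⟨t, s⟩ ⟨h1, h2, h3⟩
    exact ⟨⟨by linarith, h3⟩, h1.le, by linarith⟩
  rw [← Measure.volume_eq_prod]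
  exact (hF.mono_set hsub).integrable_indicator measurableSet_triangle

variable [NormedSpace ℝ E]

lemma integral_indicator_triangle_fst (t : ℝ) :
    ∫ s, (triangle b d x).indicator (uncurry F) (t, s)
      = (Ioc (b + d) x).indicator (fun t => ∫ s in b..(t - d), F t s) t := by
  by_cases ht : t ∈ Ioc (b + d) x
  · have hsec : ∀ s, (triangle b d x).indicator (uncurry F) (t, s)
        = (Ioc b (t - d)).indicator (F t) s :=
      fun s => indicator_eq_indicator (by simp [triangle, ht.2, le_sub_iff_add_le]) rfl
    rw [integral_congr_ae (.of_forall hsec), integral_indicator measurableSet_Ioc,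
      indicator_of_mem ht, intervalIntegral.integral_of_le (by linarith [ht.1])]
  · have hsec : ∀ s, (triangle b d x).indicator (uncurry F) (t, s) = 0 :=
      fun s => indicator_of_notMem (fun hp => ht ⟨by linarith [hp.1, hp.2.1], hp.2.2⟩) _
    simp [hsec, indicator_of_notMem ht]

lemma integral_indicator_triangle_snd (s : ℝ) :
    ∫ t, (triangle b d x).indicator (uncurry F) (t, s)
      = (Ioc b (x - d)).indicator (fun s => ∫ t in (s + d)..x, F t s) s := by
  by_cases hs : s ∈ Ioc b (x - d)
  · have hsec : ∀ t, (triangle b d x).indicator (uncurry F) (t, s)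
        = (Icc (s + d) x).indicator (F · s) t :=
      fun t => indicator_eq_indicator (by simp [triangle, hs.1]) rfl
    rw [integral_congr_ae (.of_forall hsec), integral_indicator measurableSet_Icc,
      indicator_of_mem hs, intervalIntegral.integral_of_le (by linarith [hs.2]),
      integral_Icc_eq_integral_Ioc]
  · have hsec : ∀ t, (triangle b d x).indicator (uncurry F) (t, s) = 0 :=
      fun t => indicator_of_notMem (fun hp => hs ⟨hp.1, by linarith [hp.2.1, hp.2.2]⟩) _
    simp [hsec, indicator_of_notMem hs]

theorem integral_triangle_swap (h : b + d ≤ x)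
    (hF : IntegrableOn (uncurry F) (Icc (b + d) x ×ˢ Icc b (x - d))) :
    ∫ t in (b + d)..x, ∫ s in b..(t - d), F t s = ∫ s in b..(x - d), ∫ t in (s + d)..x, F t s :=
  calc ∫ t in (b + d)..x, ∫ s in b..(t - d), F t s
      = ∫ t, ∫ s, (triangle b d x).indicator (uncurry F) (t, s) := by
        rw [intervalIntegral.integral_of_le h, ← integral_indicator measurableSet_Ioc]
        simp only [integral_indicator_triangle_fst]
    _ = ∫ s, ∫ t, (triangle b d x).indicator (uncurry F) (t, s) :=
        integral_integral_swap (integrable_indicator_triangle hF)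
    _ = ∫ s in b..(x - d), ∫ t in (s + d)..x, F t s := by
        rw [intervalIntegral.integral_of_le (by linarith), ← integral_indicator measurableSet_Ioc]
        simp only [integral_indicator_triangle_snd]

theorem intervalIntegrable_triangle_fst (h : b + d ≤ x)
    (hF : IntegrableOn (uncurry F) (Icc (b + d) x ×ˢ Icc b (x - d))) :
    IntervalIntegrable (fun t => ∫ s in b..(t - d), F t s) volume (b + d) x := by
  rw [intervalIntegrable_iff_integrableOn_Ioc_of_le h, ← integrable_indicator_iff measurableSet_Ioc]
  simpa only [integral_indicator_triangle_fst] using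
    (integrable_indicator_triangle hF).integral_prod_left

theorem intervalIntegrable_triangle_snd (h : b + d ≤ x)
    (hF : IntegrableOn (uncurry F) (Icc (b + d) x ×ˢ Icc b (x - d))) :
    IntervalIntegrable (fun s => ∫ t in (s + d)..x, F t s) volume b (x - d) := by
  rw [intervalIntegrable_iff_integrableOn_Ioc_of_le (by linarith),
    ← integrable_indicator_iff measurableSet_Ioc]
  simpa only [integral_indicator_triangle_snd] using
    (integrable_indicator_triangle hF).integral_prod_right

end Triangle

section Kernels

variable {f g φ : ℝ → ℂ} {b d x : ℝ}

lemma integrable_mul_comp_sub (hf : Integrable f) (hg : Integrable g) :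
    Integrable (fun p : ℝ × ℝ => f p.1 * g (p.1 - p.2)) := by
  have h := (measurePreserving_prod_sub volume volume).integrable_comp_of_integrable
    (hf.mul_prod hg.comp_neg)
  simpa only [comp_def, neg_sub, ← Measure.volume_eq_prod] using h

lemma integrableOn_mul_mul (hf : Integrable f) (hg : Integrable g) (hφ : Continuous φ)
    {K : Set (ℝ × ℝ)} (hK : IsCompact K) :
    IntegrableOn (uncurry fun t s => f t * (g s * φ s)) K := by
  have h : Integrable (fun p : ℝ × ℝ => f p.1 * g p.2) := by
    rw [Measure.volume_eq_prod]; exact hf.mul_prod hg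
  simpa only [uncurry_def, comp_apply, mul_assoc] using
    h.integrableOn.mul_continuousOn (hφ.comp continuous_snd).continuousOn hK

lemma integrableOn_mul_comp_sub_mul (hf : Integrable f) (hg : Integrable g) (hφ : Continuous φ)
    {K : Set (ℝ × ℝ)} (hK : IsCompact K) :
    IntegrableOn (uncurry fun t u => f t * (g (t - u) * φ u)) K := by
  simpa only [uncurry_def, comp_apply, mul_assoc] using
    (integrable_mul_comp_sub hf hg).integrableOn.mul_continuousOn
      (hφ.comp continuous_snd).continuousOn hK

theorem integral_mul_integral_mul (hf : Integrable f) (hg : Integrable g) (hφ : Continuous φ)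
    (h : b + d ≤ x) :
    ∫ t in (b + d)..x, f t * ∫ s in b..(t - d), g s * φ s
      = ∫ s in b..(x - d), (∫ t in (s + d)..x, f t) * (g s * φ s) := by
  simp only [← intervalIntegral.integral_const_mul, ← intervalIntegral.integral_mul_const]
  exact integral_triangle_swap h (integrableOn_mul_mul hf hg hφ (isCompact_Icc.prod isCompact_Icc))

lemma mul_integral_mul_comp_sub (t : ℝ) :
    f t * ∫ s in b..(t - d), g s * φ (t - s) = ∫ u in d..(t - b), f t * (g (t - u) * φ u) := by
  have h := intervalIntegral.integral_comp_sub_left (fun u => g (t - u) * φ u)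
    (a := b) (b := t - d) t
  simp only [sub_sub_cancel] at h
  rw [h, intervalIntegral.integral_const_mul]

lemma integral_mul_comp_sub_mul (u : ℝ) :
    (∫ t in (u + b)..x, f t * g (t - u)) * φ u = ∫ t in (u + b)..x, f t * (g (t - u) * φ u) := by
  simp only [← mul_assoc, intervalIntegral.integral_mul_const]

theorem integral_mul_integral_mul_comp_sub (hf : Integrable f) (hg : Integrable g)
    (hφ : Continuous φ) (h : b + d ≤ x) :
    ∫ t in (b + d)..x, f t * ∫ s in b..(t - d), g s * φ (t - s)
      = ∫ u in d..(x - b), (∫ t in (u + b)..x, f t * g (t - u)) * φ u := by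
  simp only [mul_integral_mul_comp_sub, integral_mul_comp_sub_mul, add_comm b d]
  exact integral_triangle_swap (by linarith)
    (integrableOn_mul_comp_sub_mul hf hg hφ (isCompact_Icc.prod isCompact_Icc))

theorem intervalIntegrable_mul_integral_mul_comp_sub (hf : Integrable f) (hg : Integrable g)
    (hφ : Continuous φ) (h : b + d ≤ x) :
    IntervalIntegrable (fun t => f t * ∫ s in b..(t - d), g s * φ (t - s)) volume (b + d) x := by
  simp only [mul_integral_mul_comp_sub, add_comm b d]
  exact intervalIntegrable_triangle_fst (by linarith)
    (integrableOn_mul_comp_sub_mul hf hg hφ (isCompact_Icc.prod isCompact_Icc))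

theorem intervalIntegrable_integral_mul_comp_sub_mul (hf : Integrable f) (hg : Integrable g)
    (hφ : Continuous φ) (h : b + d ≤ x) :
    IntervalIntegrable (fun u => (∫ t in (u + b)..x, f t * g (t - u)) * φ u) volume d (x - b) := by
  simp only [integral_mul_comp_sub_mul]
  exact intervalIntegrable_triangle_snd (by linarith)
    (integrableOn_mul_comp_sub_mul hf hg hφ (isCompact_Icc.prod isCompact_Icc))

end Kernels

section Trigonometry

/-- `(-1) ^ (ν + 1)` times the derivative of `y0 ρ ν`. -/
noncomputable def yDual (ρ : ℂ) (ν : ℕ) (u : ℝ) : ℂ :=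
  if ν = 0 then ρ * Complex.sin (ρ * u) else Complex.cos (ρ * u)

@[fun_prop]
lemma continuous_y0 (ρ : ℂ) (ν : ℕ) : Continuous (y0 ρ ν) := by
  unfold y0; split_ifs <;> fun_prop

@[fun_prop]
lemma continuous_yDual (ρ : ℂ) (ν : ℕ) : Continuous (yDual ρ ν) := by
  unfold yDual; split_ifs <;> fun_prop

variable {ρ : ℂ} {ν : ℕ}

lemma sin_div_mul_y0 (hρ : ρ ≠ 0) (hν : ν = 0 ∨ ν = 1) (A B : ℝ) :
    Complex.sin (ρ * A) / ρ * y0 ρ ν B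
      = 1 / (2 * ρ ^ 2) * ((-1) ^ ν * yDual ρ ν (A + B) + yDual ρ ν (A - B)) := by
  rcases hν with rfl | rfl <;>
  · simp only [y0, yDual, reduceIte, one_ne_zero, pow_zero, pow_one, Complex.ofReal_add,
      Complex.ofReal_sub, mul_add, mul_sub, Complex.sin_add, Complex.sin_sub, Complex.cos_add,
      Complex.cos_sub]
    field_simp
    ring

lemma sin_div_mul_yDual (hρ : ρ ≠ 0) (hν : ν = 0 ∨ ν = 1) (A B : ℝ) :
    Complex.sin (ρ * A) / ρ * yDual ρ ν B
      = 1 / 2 * (y0 ρ ν (A - B) - (-1) ^ ν * y0 ρ ν (A + B)) := by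
  rcases hν with rfl | rfl <;>
  · simp only [y0, yDual, reduceIte, one_ne_zero, pow_zero, pow_one, Complex.ofReal_add,
      Complex.ofReal_sub, mul_add, mul_sub, Complex.sin_add, Complex.sin_sub, Complex.cos_add,
      Complex.cos_sub]
    field_simp
    ring

lemma neg_one_pow_sq (n : ℕ) : ((-1 : ℂ) ^ n) ^ 2 = 1 := by
  rw [← pow_mul, pow_mul', neg_one_sq, one_pow]

end Trigonometry

lemma intervalIntegral_eq_of_forall_Ioc_eq_zero {E : Type*} [NormedAddCommGroup E]
    [NormedSpace ℝ E] {f : ℝ → E} {a b c : ℝ} (hab : a ≤ b) (hbc : b ≤ c)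
    (h : ∀ t ∈ Ioc a b, f t = 0) : ∫ t in a..c, f t = ∫ t in b..c, f t := by
  rw [intervalIntegral.integral_of_le (hab.trans hbc), intervalIntegral.integral_of_le hbc]
  exact setIntegral_eq_of_subset_of_forall_sdiff_eq_zero measurableSet_Ioc
    (Ioc_subset_Ioc_left hab) fun t ht => h t ⟨ht.1.1, not_lt.1 fun hbt => ht.2 ⟨hbt, ht.1.2⟩⟩

lemma MeasureTheory.Integrable.intervalIntegrable_mul_continuous {q c : ℝ → ℂ}
    (hq : Integrable q) (hc : Continuous c) {u v : ℝ} :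
    IntervalIntegrable (fun t => q t * c t) volume u v :=
  hq.intervalIntegrable.mul_continuousOn hc.continuousOn

section SecondIterate

variable {a x : ℝ} {q : ℝ → ℂ} {ρ : ℂ} {ν : ℕ}

lemma ySeq_one_eq_zero_of_le (hqa : ∀ t ≤ a, q t = 0) {τ : ℝ} (hτ : τ ≤ a) :
    ySeq a q ρ ν 1 τ = 0 := by
  show ∫ t in a..τ, _ = 0
  rw [intervalIntegral.integral_congr (g := fun _ => 0), intervalIntegral.integral_zero]
  intro t ht
  rw [uIcc_of_ge hτ] at ht
  simp [hqa t ht.2]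

lemma ySeq_two_eq_integral_from (ha : 0 ≤ a) (hqa : ∀ t ≤ a, q t = 0) (hx : 2 * a ≤ x) :
    ySeq a q ρ ν 2 x = ∫ t in (2 * a)..x,
      Complex.sin (ρ * ((x - t : ℝ) : ℂ)) / ρ * q t * ySeq a q ρ ν 1 (t - a) :=
  intervalIntegral_eq_of_forall_Ioc_eq_zero (by linarith) hx fun t ht => by
    rw [ySeq_one_eq_zero_of_le hqa (by linarith [ht.2]), mul_zero]

lemma ySeq_one_sub (hq : Integrable q) (hρ : ρ ≠ 0) (hν : ν = 0 ∨ ν = 1) (t : ℝ) :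
    ySeq a q ρ ν 1 (t - a)
      = 1 / (2 * ρ ^ 2) * ((-1) ^ ν * (∫ s in a..(t - a), q s) * yDual ρ ν (t - 2 * a)
          + ∫ s in a..(t - a), q s * yDual ρ ν (t - 2 * s)) := by
  have key : ∀ s, Complex.sin (ρ * ((t - a - s : ℝ) : ℂ)) / ρ * q s * y0 ρ ν (s - a)
      = (-1) ^ ν / (2 * ρ ^ 2) * yDual ρ ν (t - 2 * a) * q s
        + 1 / (2 * ρ ^ 2) * (q s * yDual ρ ν (t - 2 * s)) := by
    intro s
    have h := sin_div_mul_y0 hρ hν (t - a - s) (s - a)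
    rw [show t - a - s + (s - a) = t - 2 * a by ring,
      show t - a - s - (s - a) = t - 2 * s by ring] at h
    linear_combination q s * h
  show ∫ s in a..(t - a), Complex.sin (ρ * ((t - a - s : ℝ) : ℂ)) / ρ * q s * y0 ρ ν (s - a) = _
  rw [intervalIntegral.integral_congr fun s _ => key s, intervalIntegral.integral_add
      (hq.intervalIntegrable.const_mul _)
      ((hq.intervalIntegrable_mul_continuous (by fun_prop)).const_mul _),
    intervalIntegral.integral_const_mul, intervalIntegral.integral_const_mul]
  ring

lemma sin_div_mul_integral_mul_yDual (hq : Integrable q) (hρ : ρ ≠ 0) (hν : ν = 0 ∨ ν = 1)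
    (t : ℝ) :
    Complex.sin (ρ * ((x - t : ℝ) : ℂ)) / ρ * ∫ s in a..(t - a), q s * yDual ρ ν (t - 2 * s)
      = 1 / 2 * (∫ s in a..(t - a), q s * y0 ρ ν (x - 2 * (t - s)))
        - (-1) ^ ν / 2 * ∫ s in a..(t - a), q s * y0 ρ ν (x - 2 * s) := by
  have key : ∀ s, Complex.sin (ρ * ((x - t : ℝ) : ℂ)) / ρ * (q s * yDual ρ ν (t - 2 * s))
      = 1 / 2 * (q s * y0 ρ ν (x - 2 * (t - s))) - (-1) ^ ν / 2 * (q s * y0 ρ ν (x - 2 * s)) := by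
    intro s
    have h := sin_div_mul_yDual hρ hν (x - t) (t - 2 * s)
    rw [show x - t - (t - 2 * s) = x - 2 * (t - s) by ring,
      show x - t + (t - 2 * s) = x - 2 * s by ring] at h
    linear_combination q s * h
  rw [← intervalIntegral.integral_const_mul, intervalIntegral.integral_congr fun s _ => key s,
    intervalIntegral.integral_sub
      ((hq.intervalIntegrable_mul_continuous (by fun_prop)).const_mul _)
      ((hq.intervalIntegrable_mul_continuous (by fun_prop)).const_mul _),
    intervalIntegral.integral_const_mul, intervalIntegral.integral_const_mul]

lemma sin_div_mul_ySeq_one_sub (hq : Integrable q) (hρ : ρ ≠ 0) (hν : ν = 0 ∨ ν = 1) (t : ℝ) :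
    Complex.sin (ρ * ((x - t : ℝ) : ℂ)) / ρ * q t * ySeq a q ρ ν 1 (t - a)
      = (-1) ^ ν / (4 * ρ ^ 2) * (q t * ((∫ s in a..(t - a), q s) * y0 ρ ν (x - 2 * (t - a))))
        - y0 ρ ν (x - 2 * a) / (4 * ρ ^ 2) * (q t * ∫ s in a..(t - a), q s)
        + 1 / (4 * ρ ^ 2) * (q t * ∫ s in a..(t - a), q s * y0 ρ ν (x - 2 * (t - s)))
        - (-1) ^ ν / (4 * ρ ^ 2) * (q t * ∫ s in a..(t - a), q s * y0 ρ ν (x - 2 * s)) := by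
  have h := sin_div_mul_yDual hρ hν (x - t) (t - 2 * a)
  rw [show x - t - (t - 2 * a) = x - 2 * (t - a) by ring,
    show x - t + (t - 2 * a) = x - 2 * a by ring] at h
  rw [ySeq_one_sub hq hρ hν]
  linear_combination (-1) ^ ν * q t * (∫ s in a..(t - a), q s) / (2 * ρ ^ 2) * h
    + q t / (2 * ρ ^ 2) * sin_div_mul_integral_mul_yDual (x := x) hq hρ hν t
    - q t * (∫ s in a..(t - a), q s) * y0 ρ ν (x - 2 * a) / (4 * ρ ^ 2) * neg_one_pow_sq ν

lemma ySeq_two_eq_sum (ha : 0 ≤ a) (hq : Integrable q) (hqa : ∀ t ≤ a, q t = 0) (hρ : ρ ≠ 0)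
    (hν : ν = 0 ∨ ν = 1) (hx : 2 * a ≤ x) :
    ySeq a q ρ ν 2 x
      = (-1) ^ ν / (4 * ρ ^ 2)
          * (∫ t in (2 * a)..x, q t * ((∫ s in a..(t - a), q s) * y0 ρ ν (x - 2 * (t - a))))
        - y0 ρ ν (x - 2 * a) / (4 * ρ ^ 2) * omega1 a q x
        + 1 / (4 * ρ ^ 2)
          * (∫ t in (2 * a)..x, q t * ∫ s in a..(t - a), q s * y0 ρ ν (x - 2 * (t - s)))
        - (-1) ^ ν / (4 * ρ ^ 2)
          * (∫ t in (2 * a)..x, q t * ∫ s in a..(t - a), q s * y0 ρ ν (x - 2 * s)) := by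
  have hω : Continuous fun u => ∫ s in a..u, q s :=
    intervalIntegral.continuous_primitive (fun _ _ => hq.intervalIntegrable) a
  have hω' : Continuous fun u => ∫ s in a..u, q s * y0 ρ ν (x - 2 * s) :=
    intervalIntegral.continuous_primitive (fun _ _ =>
      hq.intervalIntegrable_mul_continuous (by fun_prop)) a
  have h1 : IntervalIntegrable
      (fun t => q t * ((∫ s in a..(t - a), q s) * y0 ρ ν (x - 2 * (t - a)))) volume (2 * a) x :=
    hq.intervalIntegrable_mul_continuous (by fun_prop)
  have h2 : IntervalIntegrable (fun t => q t * ∫ s in a..(t - a), q s) volume (2 * a) x :=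
    hq.intervalIntegrable_mul_continuous (by fun_prop)
  have h3 : IntervalIntegrable (fun t => q t * ∫ s in a..(t - a), q s * y0 ρ ν (x - 2 * (t - s)))
      volume (2 * a) x := by
    simpa only [← two_mul] using intervalIntegrable_mul_integral_mul_comp_sub hq hq
      (φ := fun u => y0 ρ ν (x - 2 * u)) (by fun_prop) (by linarith : a + a ≤ x)
  have h4 : IntervalIntegrable (fun t => q t * ∫ s in a..(t - a), q s * y0 ρ ν (x - 2 * s))
      volume (2 * a) x :=
    hq.intervalIntegrable_mul_continuous (hω'.comp (by fun_prop))
  rw [ySeq_two_eq_integral_from ha hqa hx, intervalIntegral.integral_congr fun t _ => sin_div_mul_ySeq_one_sub hq hρ hν t,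
    intervalIntegral.integral_sub (((h1.const_mul _).sub (h2.const_mul _)).add (h3.const_mul _))
      (h4.const_mul _),
    intervalIntegral.integral_add ((h1.const_mul _).sub (h2.const_mul _)) (h3.const_mul _),
    intervalIntegral.integral_sub (h1.const_mul _) (h2.const_mul _)]
  simp only [intervalIntegral.integral_const_mul]
  rfl

lemma integral_Rfun_mul_y0 (hq : Integrable q) (hx : a + a ≤ x) :
    ∫ t in a..(x - a), Rfun a q ν x t * y0 ρ ν (x - 2 * t)
      = (∫ u in a..(x - a), q (u + a) * ((∫ s in a..u, q s) * y0 ρ ν (x - 2 * u)))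
        - (∫ u in a..(x - a), (∫ t in (u + a)..x, q t) * (q u * y0 ρ ν (x - 2 * u)))
        + (-1) ^ ν
          * ∫ u in a..(x - a), (∫ t in (u + a)..x, q t * q (t - u)) * y0 ρ ν (x - 2 * u) := by
  have hω : Continuous fun u => ∫ s in a..u, q s :=
    intervalIntegral.continuous_primitive (fun _ _ => hq.intervalIntegrable) a
  have hω' : Continuous fun u => ∫ t in (u + a)..x, q t := by
    have h : Continuous fun u => -∫ t in x..(u + a), q t :=
      ((intervalIntegral.continuous_primitive (fun _ _ => hq.intervalIntegrable) x).comp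
        (continuous_add_const a)).neg
    simpa only [← intervalIntegral.integral_symm] using h
  have h1 : IntervalIntegrable (fun u => q (u + a) * ((∫ s in a..u, q s) * y0 ρ ν (x - 2 * u)))
      volume a (x - a) :=
    (hq.comp_add_right a).intervalIntegrable_mul_continuous (by fun_prop)
  have h2 : IntervalIntegrable (fun u => (∫ t in (u + a)..x, q t) * (q u * y0 ρ ν (x - 2 * u)))
      volume a (x - a) := by
    simpa only [mul_left_comm] using
      hq.intervalIntegrable_mul_continuous (by fun_prop)
  have h3 := intervalIntegrable_integral_mul_comp_sub_mul hq hq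
    (φ := fun u => y0 ρ ν (x - 2 * u)) (by fun_prop) hx
  rw [← intervalIntegral.integral_const_mul, ← intervalIntegral.integral_sub h1 h2,
    ← intervalIntegral.integral_add (h1.sub h2) (h3.const_mul _)]
  refine intervalIntegral.integral_congr fun t _ => ?_
  simp only [Rfun]
  ring

lemma integral_mul_integral_mul_y0_shift :
    ∫ t in (2 * a)..x, q t * ((∫ s in a..(t - a), q s) * y0 ρ ν (x - 2 * (t - a)))
      = ∫ u in a..(x - a), q (u + a) * ((∫ s in a..u, q s) * y0 ρ ν (x - 2 * u)) := by
  have h := intervalIntegral.integral_comp_sub_right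
    (fun u => q (u + a) * ((∫ s in a..u, q s) * y0 ρ ν (x - 2 * u))) (a := 2 * a) (b := x) a
  simp only [sub_add_cancel] at h
  rw [h, show 2 * a - a = a by ring]

theorem ySeq_two_eq (ha : 0 ≤ a) (hq : Integrable q) (hqa : ∀ t ≤ a, q t = 0) (hρ : ρ ≠ 0)
    (hν : ν = 0 ∨ ν = 1) (hx : 2 * a ≤ x) :
    ySeq a q ρ ν 2 x
      = -(omega1 a q x / (4 * ρ ^ 2)) * y0 ρ ν (x - 2 * a)
        + ((-1) ^ ν / (4 * ρ ^ 2)) * ∫ t in a..(x - a), Rfun a q ν x t * y0 ρ ν (x - 2 * t) := by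
  have hx' : a + a ≤ x := by linarith
  have h3 := integral_mul_integral_mul_comp_sub hq hq (φ := fun u => y0 ρ ν (x - 2 * u))
    (by fun_prop) hx'
  have h4 := integral_mul_integral_mul hq hq (φ := fun u => y0 ρ ν (x - 2 * u)) (by fun_prop) hx'
  simp only [← two_mul] at h3 h4
  rw [ySeq_two_eq_sum ha hq hqa hρ hν hx, integral_Rfun_mul_y0 hq hx',
    integral_mul_integral_mul_y0_shift, h3, h4]
  linear_combination
    -(∫ u in a..(x - a), (∫ t in (u + a)..x, q t * q (t - u)) * y0 ρ ν (x - 2 * u))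
      / (4 * ρ ^ 2) * neg_one_pow_sq ν

end SecondIterate

theorem statement4
    (a : ℝ) (ha : a ∈ Set.Ioo 0 π)
    (q : ℝ → ℂ)
    (hq2 : MemLp q 2 (volume.restrict (Set.Ioo 0 π)))
    (hq0 : ∀ x : ℝ, x ∉ Set.Ioo a π → q x = 0)
    (ρ : ℂ) (hρ : ρ ≠ 0) (lam : ℂ) (hlam : lam = ρ ^ 2) :
    ∀ ν : ℕ, (ν = 0 ∨ ν = 1) → ∀ x : ℝ, 2 * a ≤ x → x ≤ π →
      ySeq a q ρ ν 2 x
        = -(omega1 a q x / (4 * lam)) * y0 ρ ν (x - 2 * a)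
          + ((-1) ^ ν / (4 * lam)) * ∫ t in a..(x - a), Rfun a q ν x t * y0 ρ ν (x - 2 * t) := by
  intro ν hν x hx _
  have hq : Integrable q :=
    IntegrableOn.integrable_of_forall_notMem_eq_zero (hq2.integrable one_le_two) fun t ht =>
      hq0 t fun h => ht ⟨ha.1.trans h.1, h.2⟩
  have hqa : ∀ t ≤ a, q t = 0 := fun t ht => hq0 t fun h => (not_lt.2 ht) h.1
  rw [hlam]
  exact ySeq_two_eq ha.1.le hq hqa hρ hν hx
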